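/- arXiv:1907.12758 — 4 statements merged into one kernel-verified Lean document; each statement's English description precedes it below -/
import Mathlib

section
/- Let p, q ∈ ℝ² with ‖p − q‖ ≤ ℓ_p, where ℓ_p ≥ ℓ_q > 0. Then for any choice of anchoring of a segment of length ℓ_q at q (in the 2P model: q is the top or bottom endpoint), there exists a rotation angle θ such that the segment of length ℓ_p anchored at its bottom endpoint p, rotated by θ, intersects the segment of length ℓ_q anchored at q rotated by θ. Consequently, if two segments anchored in the 2P model at p and q never intersect under simultaneous rotation, then the same segments re-anchored at their bottom endpoints also never intersect. -/
/-! A segment anchored at `p` and rotated through all angles sweeps the closed disc of radius `ℓp`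
about `p`, whichever endpoint is the anchor; so if `‖p - q‖ ≤ ℓp` some rotation makes it pass
through the anchor `q` of the other segment. Conversely, two bottom-anchored segments that meet
at some angle have anchors on a common line at distance at most `max ℓp ℓq = ℓp`, so every 2P
anchoring of them meets at some angle. -/

open Real Set Metric

/-- The rotated vertical unit direction `(-sin θ, cos θ)`. -/
noncomputable def uDir (θ : ℝ) : EuclideanSpace ℝ (Fin 2) := !₂[-Real.sin θ, Real.cos θ]

/-- Segment of length `ℓ` anchored at its bottom endpoint `p`, rotated by angle `θ`. -/
noncomputable def seg (p : EuclideanSpace ℝ (Fin 2)) (ℓ θ : ℝ) : Set (EuclideanSpace ℝ (Fin 2)) :=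
  (fun t : ℝ => p + t • uDir θ) '' Set.Icc 0 ℓ

/-- 2P-model segment: anchored at its bottom endpoint (`top = false`) or at its top endpoint
(`top = true`). -/
noncomputable def seg2P (p : EuclideanSpace ℝ (Fin 2)) (top : Bool) (ℓ θ : ℝ) :
    Set (EuclideanSpace ℝ (Fin 2)) :=
  (fun t : ℝ => p + (if top then -t else t) • uDir θ) '' Set.Icc 0 ℓ

lemma norm_uDir (θ : ℝ) : ‖uDir θ‖ = 1 := by
  rw [EuclideanSpace.norm_eq, Fin.sum_univ_two]
  simp [uDir, Real.sin_sq_add_cos_sq]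

lemma exists_eq_norm_smul_uDir (v : EuclideanSpace ℝ (Fin 2)) : ∃ θ, v = ‖v‖ • uDir θ := by
  set z : ℂ := ⟨v 1, -v 0⟩
  have hz : ‖z‖ = ‖v‖ := by
    rw [Complex.norm_def, Complex.normSq_mk, EuclideanSpace.norm_eq, Fin.sum_univ_two]
    simp only [Real.norm_eq_abs, sq_abs]
    ring_nf
  refine ⟨z.arg, ?_⟩
  ext i
  fin_cases i
  · show v 0 = ‖v‖ * -Real.sin z.arg
    rw [← hz, mul_neg, Complex.norm_mul_sin_arg, neg_neg]
  · show v 1 = ‖v‖ * Real.cos z.arg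
    rw [← hz, Complex.norm_mul_cos_arg]

lemma mem_seg2P_self (p : EuclideanSpace ℝ (Fin 2)) (top : Bool) {ℓ : ℝ} (θ : ℝ) (hℓ : 0 ≤ ℓ) :
    p ∈ seg2P p top ℓ θ :=
  ⟨0, ⟨le_rfl, hℓ⟩, by cases top <;> simp⟩

lemma exists_mem_seg2P_of_dist_le {p x : EuclideanSpace ℝ (Fin 2)} {ℓ : ℝ} (h : dist p x ≤ ℓ)
    (top : Bool) : ∃ θ, x ∈ seg2P p top ℓ θ := by
  cases top
  · obtain ⟨θ, hθ⟩ := exists_eq_norm_smul_uDir (x - p)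
    refine ⟨θ, ‖x - p‖, ⟨norm_nonneg _, by rwa [← dist_eq_norm, dist_comm]⟩, ?_⟩
    simp only [Bool.false_eq_true, if_false]
    rw [← hθ, add_sub_cancel]
  · obtain ⟨θ, hθ⟩ := exists_eq_norm_smul_uDir (p - x)
    refine ⟨θ, ‖p - x‖, ⟨norm_nonneg _, by rwa [← dist_eq_norm]⟩, ?_⟩
    simp only [if_true]
    rw [neg_smul, ← hθ, ← sub_eq_add_neg, sub_sub_cancel]

lemma exists_seg2P_inter_nonempty {p q : EuclideanSpace ℝ (Fin 2)} {ℓp ℓq : ℝ}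
    (hdist : dist p q ≤ ℓp) (hℓq : 0 ≤ ℓq) (ap aq : Bool) :
    ∃ θ, (seg2P p ap ℓp θ ∩ seg2P q aq ℓq θ).Nonempty := by
  obtain ⟨θ, hθ⟩ := exists_mem_seg2P_of_dist_le hdist ap
  exact ⟨θ, q, hθ, mem_seg2P_self q aq θ hℓq⟩

lemma seg_eq_seg2P_false (p : EuclideanSpace ℝ (Fin 2)) (ℓ θ : ℝ) :
    seg p ℓ θ = seg2P p false ℓ θ := by
  simp [seg, seg2P]

lemma dist_le_max_of_seg_inter_nonempty {p q : EuclideanSpace ℝ (Fin 2)} {ℓp ℓq θ : ℝ}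
    (h : (seg p ℓp θ ∩ seg q ℓq θ).Nonempty) : dist p q ≤ max ℓp ℓq := by
  obtain ⟨_, ⟨t, ⟨ht0, htp⟩, rfl⟩, ⟨s, ⟨hs0, hsq⟩, hs⟩⟩ := h
  have hpq : p - q = (s - t) • uDir θ := by
    rw [sub_smul, sub_eq_sub_iff_add_eq_add, add_comm _ q]
    exact hs.symm
  rw [dist_eq_norm, hpq, norm_smul, norm_uDir, mul_one, Real.norm_eq_abs, abs_sub_le_iff]
  constructor <;> linarith [le_max_left ℓp ℓq, le_max_right ℓp ℓq]

/-- If `‖p − q‖ ≤ ℓp` (with `ℓp ≥ ℓq > 0`), then for either anchoring of the segment at `q`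
there is a rotation angle at which the bottom-anchored segment at `p` meets it.  Consequently,
if two segments anchored in the 2P model at `p` and `q` never intersect under simultaneous
rotation, then the same segments re-anchored at their bottom endpoints also never intersect. -/
theorem stmt2 (p q : EuclideanSpace ℝ (Fin 2)) (ℓp ℓq : ℝ)
    (hℓq : 0 < ℓq) (hpq : ℓq ≤ ℓp) :
    (dist p q ≤ ℓp →
      ∀ aq : Bool, ∃ θ : ℝ, (seg p ℓp θ ∩ seg2P q aq ℓq θ).Nonempty) ∧
    (∀ ap aq : Bool,
      (∀ θ : ℝ, Disjoint (seg2P p ap ℓp θ) (seg2P q aq ℓq θ)) →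
      ∀ θ : ℝ, Disjoint (seg p ℓp θ) (seg q ℓq θ)) := by
  refine ⟨fun hdist aq => ?_, fun ap aq hdisj θ => ?_⟩
  · simpa only [seg_eq_seg2P_false] using exists_seg2P_inter_nonempty hdist hℓq.le false aq
  · rw [Set.disjoint_iff_inter_eq_empty, ← Set.not_nonempty_iff_eq_empty]
    intro hmeet
    have hdist : dist p q ≤ ℓp := max_eq_left hpq ▸ dist_le_max_of_seg_inter_nonempty hmeet
    obtain ⟨θ', x, hxp, hxq⟩ := exists_seg2P_inter_nonempty hdist hℓq.le ap aq
    exact Set.disjoint_left.mp (hdisj θ') hxp hxq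
end

section
/- Let x ∈ ℝ² be any point, and let D be a finite family of closed disks in ℝ² such that the family is centre-disjoint (no disk contains the center of another disk) and every disk in D contains x. Then |D| ≤ 6. -/
open Real Set Metric

private lemma dist_eq_cabs (v w : EuclideanSpace ℝ (Fin 2)) :
    dist v w = ‖(⟨v 0 - w 0, v 1 - w 1⟩ : ℂ)‖ := by
  rw [EuclideanSpace.dist_eq, Fin.sum_univ_two, Complex.norm_def, Complex.normSq_mk]
  congr 1
  rw [Real.dist_eq, Real.dist_eq, sq_abs, sq_abs]; ring

private lemma key_cos (z w : ℂ) (hz : z ≠ 0) (hw : w ≠ 0)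
    (h1 : ‖z‖ < ‖z - w‖)
    (h2 : ‖w‖ < ‖z - w‖) :
    Real.cos (Complex.arg z - Complex.arg w) < 1 / 2 := by
  have az : 0 < ‖z‖ := norm_pos_iff.mpr hz
  have aw : 0 < ‖w‖ := norm_pos_iff.mpr hw
  have hzsq : (‖z‖)^2 = z.re^2 + z.im^2 := by
    rw [Complex.sq_norm, Complex.normSq_apply]; ring
  have hwsq : (‖w‖)^2 = w.re^2 + w.im^2 := by
    rw [Complex.sq_norm, Complex.normSq_apply]; ring
  have hzwsq : (‖z - w‖)^2 = (z.re - w.re)^2 + (z.im - w.im)^2 := by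
    rw [Complex.sq_norm, Complex.normSq_apply]; simp [Complex.sub_re, Complex.sub_im]; ring
  have h1' : (‖z‖)^2 < (‖z - w‖)^2 := by
    apply sq_lt_sq' _ h1; linarith [norm_nonneg (z - w)]
  have h2' : (‖w‖)^2 < (‖z - w‖)^2 := by
    apply sq_lt_sq' _ h2; linarith [norm_nonneg (z - w)]
  have hp1 : 2 * (z.re * w.re + z.im * w.im) < (‖w‖)^2 := by nlinarith
  have hp2 : 2 * (z.re * w.re + z.im * w.im) < (‖z‖)^2 := by nlinarith
  have hp : 2 * (z.re * w.re + z.im * w.im) < ‖z‖ * ‖w‖ := by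
    rcases le_or_gt (z.re * w.re + z.im * w.im) 0 with h | h
    · nlinarith
    · nlinarith [sq_nonneg (‖z‖ - ‖w‖)]
  rw [Real.cos_sub, Complex.cos_arg hz, Complex.sin_arg z, Complex.cos_arg hw,
    Complex.sin_arg w]
  rw [div_mul_div_comm, div_mul_div_comm, ← add_div, div_lt_iff₀ (by positivity)]
  nlinarith

/-- A finite centre-disjoint family of closed disks (each disk given by its centre and radius,
no disk containing the centre of another) all containing a common point `x` has at most 6
members. -/
theorem stmt7 (x : EuclideanSpace ℝ (Fin 2))
    (D : Finset (EuclideanSpace ℝ (Fin 2) × ℝ))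
    (hr : ∀ d ∈ D, 0 < d.2)
    (hcd : ∀ d ∈ D, ∀ e ∈ D, d ≠ e → dist d.1 e.1 > d.2 ∧ dist d.1 e.1 > e.2)
    (hx : ∀ d ∈ D, x ∈ Metric.closedBall d.1 d.2) :
    D.card ≤ 6 := by
  by_contra hcard
  push_neg at hcard
  set F : (EuclideanSpace ℝ (Fin 2) × ℝ) → ℂ :=
    fun d => ⟨d.1 0 - x 0, d.1 1 - x 1⟩ with hF
  have habs : ∀ d, ‖F d‖ = dist d.1 x := fun d => (dist_eq_cabs _ _).symm
  have habs2 : ∀ d e, ‖F d - F e‖ = dist d.1 e.1 := by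
    intro d e
    have hsub : F d - F e = ⟨d.1 0 - e.1 0, d.1 1 - e.1 1⟩ := by
      apply Complex.ext <;> simp [hF] <;> ring
    rw [hsub, dist_eq_cabs]
  -- the reduced angle of each disk
  set θ : (EuclideanSpace ℝ (Fin 2) × ℝ) → ℝ :=
    fun d => toIcoMod Real.two_pi_pos 0 (Complex.arg (F d)) with hθ
  have hθmem : ∀ d, θ d ∈ Set.Ico (0:ℝ) (2 * π) := by
    intro d
    have := toIcoMod_mem_Ico Real.two_pi_pos 0 (Complex.arg (F d))
    simpa using this
  -- pigeonhole into 6 buckets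
  have hmaps : ∀ d ∈ D, ⌊θ d * 3 / π⌋ ∈ Finset.Icc (0:ℤ) 5 := by
    intro d _
    obtain ⟨h0, h2π⟩ := hθmem d
    have hπ := Real.pi_pos
    rw [Finset.mem_Icc]
    have hfloor : ⌊θ d * 3 / π⌋ < 6 := by
      apply Int.floor_lt.mpr
      push_cast
      rw [div_lt_iff₀ hπ]
      linarith
    have h0' : (0:ℤ) ≤ ⌊θ d * 3 / π⌋ := Int.floor_nonneg.mpr (by positivity)
    omega
  have hmaps' : ∀ d ∈ D, ⌊θ d * 3 / π⌋ ∈ Finset.Icc (0:ℤ) 5 := hmaps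
  have hlt : (Finset.Icc (0:ℤ) 5).card < D.card := by
    simp only [Int.card_Icc]
    norm_num
    omega
  obtain ⟨d, hd, e, he, hde, hfe⟩ :=
    Finset.exists_ne_map_eq_of_card_lt_of_maps_to hlt hmaps
  -- basic facts about d and e
  obtain ⟨hded, hdee⟩ := hcd d hd e he hde
  have hxd : dist x d.1 ≤ d.2 := by simpa [Metric.mem_closedBall] using hx d hd
  have hxe : dist x e.1 ≤ e.2 := by simpa [Metric.mem_closedBall] using hx e he
  have hzne : F d ≠ 0 := by
    intro h0
    have : dist d.1 x = 0 := by rw [← habs d, h0]; simp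
    have hdx : d.1 = x := by rwa [dist_eq_zero] at this
    rw [hdx] at hdee
    linarith
  have hwne : F e ≠ 0 := by
    intro h0
    have : dist e.1 x = 0 := by rw [← habs e, h0]; simp
    have hex : e.1 = x := by rwa [dist_eq_zero] at this
    rw [dist_comm] at hded
    rw [hex] at hded
    linarith
  have h1 : ‖F d‖ < ‖F d - F e‖ := by
    rw [habs, habs2, dist_comm d.1 x]; linarith
  have h2 : ‖F e‖ < ‖F d - F e‖ := by
    rw [habs, habs2, dist_comm e.1 x]; linarith
  have hcos := key_cos (F d) (F e) hzne hwne h1 h2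
  -- cos of reduced angle difference equals cos of arg difference
  have hcosθ : Real.cos (θ d - θ e) = Real.cos (Complex.arg (F d) - Complex.arg (F e)) := by
    have hd' : θ d = Complex.arg (F d) - (toIcoDiv Real.two_pi_pos 0 (Complex.arg (F d))) * (2 * π) := by
      have := self_sub_toIcoMod Real.two_pi_pos 0 (Complex.arg (F d))
      simp only [zsmul_eq_mul] at this
      rw [hθ]; linarith
    have he' : θ e = Complex.arg (F e) - (toIcoDiv Real.two_pi_pos 0 (Complex.arg (F e))) * (2 * π) := by
      have := self_sub_toIcoMod Real.two_pi_pos 0 (Complex.arg (F e))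
      simp only [zsmul_eq_mul] at this
      rw [hθ]; linarith
    rw [hd', he']
    have : Complex.arg (F d) - toIcoDiv Real.two_pi_pos 0 (Complex.arg (F d)) * (2 * π)
        - (Complex.arg (F e) - toIcoDiv Real.two_pi_pos 0 (Complex.arg (F e)) * (2 * π))
        = (Complex.arg (F d) - Complex.arg (F e))
          - ((toIcoDiv Real.two_pi_pos 0 (Complex.arg (F d))
             - toIcoDiv Real.two_pi_pos 0 (Complex.arg (F e)) : ℤ) : ℝ) * (2 * π) := by
      push_cast; ring
    rw [this, Real.cos_sub_int_mul_two_pi]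
  -- same bucket forces small angle difference
  have hπ := Real.pi_pos
  have hfl : |θ d * 3 / π - θ e * 3 / π| < 1 := Int.abs_sub_lt_one_of_floor_eq_floor hfe
  have hsmall : |θ d - θ e| < π / 3 := by
    rw [abs_lt] at hfl ⊢
    obtain ⟨ha, hb⟩ := hfl
    have e1 : θ d * 3 / π - θ e * 3 / π = (θ d - θ e) * 3 / π := by ring
    rw [e1] at ha hb
    rw [lt_div_iff₀ hπ] at ha
    rw [div_lt_iff₀ hπ] at hb
    constructor <;> linarith
  have hcosbig : 1 / 2 < Real.cos (θ d - θ e) := by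
    rw [← Real.cos_pi_div_three, ← Real.cos_abs (θ d - θ e)]
    apply Real.cos_lt_cos_of_nonneg_of_le_pi (abs_nonneg _) (by linarith) hsmall
  rw [hcosθ] at hcosbig
  linarith
end

section
/- Let C = [0, s] × [0, s] be an axis-aligned square of side s, let r > 0 with s/r = k, and let B be a family of closed disks each of radius at least r, each intersecting the boundary of C, and pairwise centre-disjoint. Then |B| ≤ c·(k + 1) for an absolute constant c (e.g. c = 72 suffices when k ≥ 1). -/
/-!
A point lies in at most six centre-disjoint disks: seen from the point, the centres of two such
disks are farther apart than either is from the point, so by the law of cosines they subtend an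
angle greater than `π / 3`.

A disk of radius `R ≥ r` meeting `∂C` at `p` contains the whole `r`-ball around some `q` with
`|p - q| ≤ r`. The `r`-neighbourhood of a side of `C` is covered by `r`-balls centred on the two
lines at distance `r / 2` from the side, at spacing `3r / 2` along it, since
`(3r/4)² + (r/2)² ≤ r²`. This gives `8 (⌊2(k + 2)/3⌋ + 1)` points, each disk of `B` containing
one, so `|B| ≤ 48 (2(k + 2)/3 + 1) = 32 k + 112 ≤ 72 (k + 1)` once `k ≥ 1`.
-/

open Real Set Metric

/-- The axis-aligned square `[0, s] × [0, s]` in the Euclidean plane. -/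
def square (s : ℝ) : Set (EuclideanSpace ℝ (Fin 2)) :=
  {x | x 0 ∈ Set.Icc 0 s ∧ x 1 ∈ Set.Icc 0 s}

open InnerProductGeometry Module Finset

theorem InnerProductGeometry.pi_div_three_lt_angle_of_norm_lt_norm_sub {V : Type*}
    [NormedAddCommGroup V] [InnerProductSpace ℝ V] {x y : V}
    (hx : ‖x‖ < ‖x - y‖) (hy : ‖y‖ < ‖x - y‖) : π / 3 < angle x y := by
  by_contra! h
  have hcos : 1 / 2 ≤ cos (angle x y) := by
    rw [← cos_pi_div_three]
    exact cos_le_cos_of_nonneg_of_le_pi (angle_nonneg x y) (by linarith [pi_pos]) h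
  have hlaw := norm_sub_sq_eq_norm_sq_add_norm_sq_sub_two_mul_norm_mul_norm_mul_cos_angle x y
  rcases le_total ‖x‖ ‖y‖ with hxy | hxy
  · nlinarith [mul_nonneg (norm_nonneg x) (norm_nonneg y), norm_nonneg x]
  · nlinarith [mul_nonneg (norm_nonneg x) (norm_nonneg y), norm_nonneg y]

theorem Complex.angle_eq_abs_arg_sub_arg {x y : ℂ} (hx : x ≠ 0) (hy : y ≠ 0)
    (h : x.arg - y.arg ∈ Ioc (-π) π) : angle x y = |x.arg - y.arg| := by
  rw [Complex.angle_eq_abs_arg hx hy, ← Complex.arg_coe_angle_toReal_eq_arg,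
    Complex.arg_div_coe_angle hx hy, ← Real.Angle.coe_sub,
    Real.Angle.toReal_coe_eq_self_iff_mem_Ioc.2 h]

theorem abs_sub_lt_of_ceil_div_eq_ceil_div {a b c : ℝ} (hc : 0 < c) (h : ⌈a / c⌉ = ⌈b / c⌉) :
    |a - b| < c := by
  have h' : ⌊-(a / c)⌋ = ⌊-(b / c)⌋ := by rw [Int.floor_neg, Int.floor_neg, h]
  have := Int.abs_sub_lt_one_of_floor_eq_floor h'
  rwa [neg_sub_neg, abs_sub_comm, ← sub_div, abs_div, abs_of_pos hc, div_lt_one hc] at this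

theorem Complex.card_le_six_of_pi_div_three_le_angle {ι : Type*} (S : Finset ι) (f : ι → ℂ)
    (hf : ∀ i ∈ S, f i ≠ 0) (hangle : ∀ i ∈ S, ∀ j ∈ S, i ≠ j → π / 3 ≤ angle (f i) (f j)) :
    #S ≤ 6 := by
  have hπ : 0 < π / 3 := by positivity
  -- `arg ∈ (-π, π]` falls into one of the six sectors `((n - 1) π/3, n π/3]`, `-2 ≤ n ≤ 3`
  let sector : ι → ℤ := fun i => ⌈(f i).arg / (π / 3)⌉
  calc #S ≤ #(Icc (-2 : ℤ) 3) := card_le_card_of_injOn sector ?_ ?_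
    _ = 6 := rfl
  · intro i _
    obtain ⟨hlo, hhi⟩ := Complex.arg_mem_Ioc (f i)
    have hgt : ((-3 : ℤ) : ℝ) < (f i).arg / (π / 3) := by
      rw [lt_div_iff₀ hπ]; push_cast; linarith
    have hle : (f i).arg / (π / 3) ≤ ((3 : ℤ) : ℝ) := by
      rw [div_le_iff₀ hπ]; push_cast; linarith
    have := Int.lt_ceil.2 hgt
    simp only [coe_Icc, Set.mem_Icc, sector]
    exact ⟨by omega, Int.ceil_le.2 hle⟩
  · intro i hi j hj hij
    by_contra hne
    have hlt := abs_sub_lt_of_ceil_div_eq_ceil_div hπ hij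
    have hIoc : (f i).arg - (f j).arg ∈ Ioc (-π) π := by
      rw [abs_lt] at hlt; constructor <;> linarith
    have := hangle i hi j hj hne
    rw [Complex.angle_eq_abs_arg_sub_arg (hf i hi) (hf j hj) hIoc] at this
    linarith

def CentreDisjoint {α : Type*} [PseudoMetricSpace α] (S : Finset (α × ℝ)) : Prop :=
  ∀ b ∈ S, ∀ b' ∈ S, b ≠ b' → b.2 < dist b.1 b'.1 ∧ b'.2 < dist b.1 b'.1

theorem CentreDisjoint.mono {α : Type*} [PseudoMetricSpace α] {S T : Finset (α × ℝ)}
    (hS : CentreDisjoint S) (hTS : T ⊆ S) : CentreDisjoint T :=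
  fun b hb b' hb' => hS b (hTS hb) b' (hTS hb')

theorem CentreDisjoint.card_le_six_of_mem_closedBall {V : Type*} [NormedAddCommGroup V]
    [InnerProductSpace ℝ V] [Fact (finrank ℝ V = 2)] {S : Finset (V × ℝ)}
    (hS : CentreDisjoint S) {y : V} (hy : ∀ b ∈ S, y ∈ closedBall b.1 b.2) : #S ≤ 6 := by
  rcases le_or_gt #S 1 with h | h
  · omega
  have hne : ∀ b ∈ S, b.1 - y ≠ 0 := by
    intro b hb hby
    obtain ⟨b', hb', hb'b⟩ := exists_mem_ne h b
    have hfar := (hS b hb b' hb' hb'b.symm).2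
    have hnear : dist y b'.1 ≤ b'.2 := hy b' hb'
    rw [sub_eq_zero.1 hby] at hfar
    linarith
  have : FiniteDimensional ℝ V := .of_fact_finrank_eq_two
  let e : V →ₗᵢ[ℝ] ℂ := (Complex.isometryOfOrthonormal
    ((stdOrthonormalBasis ℝ V).reindex (finCongr Fact.out))).symm.toLinearIsometry
  refine Complex.card_le_six_of_pi_div_three_le_angle S (fun b => e (b.1 - y))
    (fun b hb => (map_ne_zero_iff e e.injective).2 (hne b hb)) fun b hb b' hb' hbb' => ?_
  rw [e.angle_map]
  have hd := hS b hb b' hb' hbb'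
  have hyb : dist b.1 y ≤ b.2 := dist_comm y b.1 ▸ hy b hb
  have hyb' : dist b'.1 y ≤ b'.2 := dist_comm y b'.1 ▸ hy b' hb'
  refine (pi_div_three_lt_angle_of_norm_lt_norm_sub ?_ ?_).le <;>
    simp only [sub_sub_sub_cancel_right, ← dist_eq_norm] <;> linarith

noncomputable section

def cellCentres (a d : ℝ) (n : ℕ) : Finset ℝ :=
  (range n).image fun i : ℕ => a + d * (i + 1 / 2)

theorem exists_mem_cellCentres_abs_sub_le {a d L x : ℝ} (hd : 0 < d) (hax : a ≤ x)
    (hxL : x ≤ a + L) : ∃ u ∈ cellCentres a d (⌊L / d⌋₊ + 1), |x - u| ≤ d / 2 := by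
  set i := ⌊(x - a) / d⌋₊
  have hi : i < ⌊L / d⌋₊ + 1 :=
    Nat.lt_succ_of_le (Nat.floor_le_floor (div_le_div_of_nonneg_right (by linarith) hd.le))
  have hlo : (i : ℝ) ≤ (x - a) / d := Nat.floor_le (div_nonneg (by linarith) hd.le)
  have hhi : (x - a) / d < i + 1 := Nat.lt_floor_add_one _
  rw [le_div_iff₀ hd] at hlo
  rw [div_lt_iff₀ hd] at hhi
  refine ⟨a + d * (i + 1 / 2), Finset.mem_image_of_mem _ (mem_range.2 hi), ?_⟩
  rw [abs_le]; constructor <;> linarith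

local notation "E" => EuclideanSpace ℝ (Fin 2)

theorem EuclideanSpace.dist_sq_eq_fin_two (x y : E) :
    dist x y ^ 2 = (x 0 - y 0) ^ 2 + (x 1 - y 1) ^ 2 := by
  simp [EuclideanSpace.dist_sq_eq, Fin.sum_univ_two, Real.dist_eq, sq_abs]

theorem frontier_square_subset (s : ℝ) :
    frontier (square s) ⊆ {x | x ∈ square s ∧ ((x 0 = 0 ∨ x 0 = s) ∨ (x 1 = 0 ∨ x 1 = s))} := by
  have hclosed : IsClosed (square s) :=
    (isClosed_Icc.preimage (by fun_prop)).inter (isClosed_Icc.preimage (by fun_prop))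
  have hopen : IsOpen {x : E | x 0 ∈ Ioo 0 s ∧ x 1 ∈ Ioo 0 s} :=
    (isOpen_Ioo.preimage (by fun_prop)).inter (isOpen_Ioo.preimage (by fun_prop))
  have hint : {x : E | x 0 ∈ Ioo 0 s ∧ x 1 ∈ Ioo 0 s} ⊆ interior (square s) :=
    hopen.subset_interior_iff.2 fun x hx => ⟨Ioo_subset_Icc_self hx.1, Ioo_subset_Icc_self hx.2⟩
  intro x hx
  rw [frontier, hclosed.closure_eq] at hx
  obtain ⟨⟨⟨h0, h0'⟩, ⟨h1, h1'⟩⟩, hxint⟩ := hx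
  refine ⟨⟨⟨h0, h0'⟩, ⟨h1, h1'⟩⟩, ?_⟩
  by_contra! hne
  exact hxint (hint ⟨⟨h0.lt_of_ne' hne.1.1, h0'.lt_of_ne hne.1.2⟩,
    ⟨h1.lt_of_ne' hne.2.1, h1'.lt_of_ne hne.2.2⟩⟩)

def sideCount (s r : ℝ) : ℕ := ⌊(s + 2 * r) / (3 * r / 2)⌋₊ + 1

def alongSide (s r : ℝ) : Finset ℝ := cellCentres (-r) (3 * r / 2) (sideCount s r)

def acrossSide (s r : ℝ) : Finset ℝ := {-(r / 2), r / 2, s - r / 2, s + r / 2}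

def squareNet (s r : ℝ) : Finset E :=
  (alongSide s r ×ˢ acrossSide s r).image (fun p => !₂[p.1, p.2]) ∪
    (alongSide s r ×ˢ acrossSide s r).image (fun p => !₂[p.2, p.1])

theorem sideCount_le {s r : ℝ} (hr : 0 < r) (hs : 0 ≤ s + 2 * r) :
    (sideCount s r : ℝ) ≤ 2 / 3 * (s / r) + 7 / 3 := by
  have hfloor := Nat.floor_le (div_nonneg hs (by positivity : (0 : ℝ) ≤ 3 * r / 2))
  have hratio : (s + 2 * r) / (3 * r / 2) = 2 / 3 * (s / r) + 4 / 3 := by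
    field_simp
    ring
  rw [sideCount, Nat.cast_add_one]
  linarith

theorem card_squareNet_le (s r : ℝ) : #(squareNet s r) ≤ 8 * sideCount s r := by
  have hC : #(alongSide s r) ≤ sideCount s r := card_image_le.trans (card_range _).le
  have hO : #(acrossSide s r) ≤ 4 := card_le_four
  calc #(squareNet s r) ≤ 2 * #(alongSide s r ×ˢ acrossSide s r) := by
        rw [two_mul]
        exact (Finset.card_union_le _ _).trans (add_le_add card_image_le card_image_le)
    _ ≤ 8 * sideCount s r := by
        rw [card_product]; nlinarith

theorem exists_mem_acrossSide {s r e y : ℝ} (he : e = 0 ∨ e = s) (hy : |y - e| ≤ r) :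
    ∃ v ∈ acrossSide s r, |y - v| ≤ r / 2 := by
  rw [abs_le] at hy
  rcases le_total e y with hey | hye
  · refine ⟨e + r / 2, ?_, by rw [abs_le]; constructor <;> linarith⟩
    rcases he with rfl | rfl <;> simp [acrossSide]
  · refine ⟨e - r / 2, ?_, by rw [abs_le]; constructor <;> linarith⟩
    rcases he with rfl | rfl <;> simp [acrossSide]

theorem exists_mem_alongSide_mem_acrossSide {s r x y e : ℝ} (hr : 0 < r)
    (hx : x ∈ Icc (-r) (s + r)) (he : e = 0 ∨ e = s) (hy : |y - e| ≤ r) :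
    ∃ u ∈ alongSide s r, ∃ v ∈ acrossSide s r, (u - x) ^ 2 + (v - y) ^ 2 ≤ r ^ 2 := by
  obtain ⟨u, hu, hxu⟩ := exists_mem_cellCentres_abs_sub_le (L := s + 2 * r)
    (by positivity : (0 : ℝ) < 3 * r / 2) hx.1 (by linarith [hx.2])
  obtain ⟨v, hv, hyv⟩ := exists_mem_acrossSide he hy
  refine ⟨u, hu, v, hv, ?_⟩
  have hxu' := sq_le_sq' (abs_le.1 hxu).1 (abs_le.1 hxu).2
  have hyv' := sq_le_sq' (abs_le.1 hyv).1 (abs_le.1 hyv).2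
  nlinarith

theorem exists_mem_squareNet_dist_le {s r : ℝ} (hr : 0 < r) {p q : E}
    (hp : p ∈ frontier (square s)) (hpq : dist p q ≤ r) : ∃ z ∈ squareNet s r, dist z q ≤ r := by
  obtain ⟨⟨⟨h0, h0'⟩, ⟨h1, h1'⟩⟩, hside⟩ := frontier_square_subset s hp
  have hq0 := abs_le.1 ((Real.dist_eq _ _ ▸ PiLp.dist_apply_le p q 0).trans hpq)
  have hq1 := abs_le.1 ((Real.dist_eq _ _ ▸ PiLp.dist_apply_le p q 1).trans hpq)
  have hdist : ∀ z : E, (z 0 - q 0) ^ 2 + (z 1 - q 1) ^ 2 ≤ r ^ 2 → dist z q ≤ r := fun z hz =>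
    (sq_le_sq₀ dist_nonneg hr.le).1 (by rwa [EuclideanSpace.dist_sq_eq_fin_two])
  rcases hside with he | he
  · obtain ⟨u, hu, v, hv, huv⟩ := exists_mem_alongSide_mem_acrossSide (x := q 1) (y := q 0) hr
      ⟨by linarith, by linarith⟩ he (by rw [abs_le]; constructor <;> linarith)
    refine ⟨!₂[v, u], mem_union_right _ (mem_image.2 ⟨(u, v), mem_product.2 ⟨hu, hv⟩, rfl⟩),
      hdist _ ?_⟩
    simpa [add_comm] using huv
  · obtain ⟨u, hu, v, hv, huv⟩ := exists_mem_alongSide_mem_acrossSide (x := q 0) (y := q 1) hr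
      ⟨by linarith, by linarith⟩ he (by rw [abs_le]; constructor <;> linarith)
    refine ⟨!₂[u, v], mem_union_left _ (mem_image.2 ⟨(u, v), mem_product.2 ⟨hu, hv⟩, rfl⟩),
      hdist _ ?_⟩
    simpa using huv

theorem exists_mem_squareNet_mem_closedBall {s r R : ℝ} (hr : 0 < r) (hrR : r ≤ R) {c : E}
    (hmeet : (closedBall c R ∩ frontier (square s)).Nonempty) :
    ∃ z ∈ squareNet s r, z ∈ closedBall c R := by
  obtain ⟨p, hpc, hp⟩ := hmeet
  obtain ⟨q, hpq, hqc⟩ := exists_dist_le_le hr.le (sub_nonneg.2 hrR)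
    (show dist p c ≤ R - r + r by simpa [dist_comm] using hpc)
  obtain ⟨z, hz, hzq⟩ := exists_mem_squareNet_dist_le hr hp hpq
  exact ⟨z, hz, (dist_triangle z q c).trans (by linarith)⟩

end

/-- A centre-disjoint family of closed disks, each of radius at least `r` and each intersecting
the boundary of the square `[0, s]²` with `k = s / r ≥ 1`, has at most `72 (k + 1)` members. -/
theorem stmt9 (s r : ℝ) (hr : 0 < r) (hk : 1 ≤ s / r)
    (B : Finset (EuclideanSpace ℝ (Fin 2) × ℝ))
    (hrad : ∀ b ∈ B, r ≤ b.2)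
    (hmeet : ∀ b ∈ B, (Metric.closedBall b.1 b.2 ∩ frontier (square s)).Nonempty)
    (hcd : ∀ b ∈ B, ∀ b' ∈ B, b ≠ b' → dist b.1 b'.1 > b.2 ∧ dist b.1 b'.1 > b'.2) :
    (B.card : ℝ) ≤ 72 * (s / r + 1) := by
  classical
  let covers : EuclideanSpace ℝ (Fin 2) × ℝ → EuclideanSpace ℝ (Fin 2) → Prop :=
    fun b z => z ∈ closedBall b.1 b.2
  have hcover : ∀ b ∈ B, 1 ≤ #((squareNet s r).bipartiteAbove covers b) := by
    intro b hb
    obtain ⟨z, hz, hzb⟩ := exists_mem_squareNet_mem_closedBall hr (hrad b hb) (hmeet b hb)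
    exact card_pos.2 ⟨z, (mem_bipartiteAbove _).2 ⟨hz, hzb⟩⟩
  have : Fact (finrank ℝ (EuclideanSpace ℝ (Fin 2)) = 2) := ⟨finrank_euclideanSpace_fin⟩
  have hmult : ∀ z ∈ squareNet s r, #(B.bipartiteBelow covers z) ≤ 6 := fun z _ =>
    (CentreDisjoint.mono hcd (filter_subset _ _)).card_le_six_of_mem_closedBall
      fun b hb => ((mem_bipartiteBelow _).1 hb).2
  have hcount : #B ≤ 48 * sideCount s r := by
    have := card_mul_le_card_mul covers hcover hmult
    have := card_squareNet_le s r
    omega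
  have hsize := sideCount_le hr (by have := (le_div_iff₀ hr).1 hk; linarith)
  have : (#B : ℝ) ≤ 48 * (sideCount s r : ℝ) := by exact_mod_cast hcount
  linarith
end

section
/- Let s, r > 0 and let X be the boundary of the square [0, s]². There exists a finite set of points Y ⊆ ℝ² with |Y| ≤ 12·(s/r + 4) such that every closed disk of radius at least r whose boundary circle or interior intersects X contains at least one point of Y. -/
/-!
A disk of radius `ρ ≥ r` meeting the boundary of the square contains a disk of radius `r` whose
centre `c` lies within `r` of some edge. Such a centre lies in one of the four strips of width `2r`
around the edges; each strip is tiled by `r × r` squares, at most `⌈s/r⌉ + 3` along the edge and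
two across it, and a tile lies in the disk of radius `r/√2 < r` about its centre. The tile centres
form a piercing set of at most `8 (⌈s/r⌉ + 3)` points.
-/

open Real Set Metric

theorem exists_closedBall_subset_of_mem_closedBall {E : Type*} [SeminormedAddCommGroup E]
    [NormedSpace ℝ E] {c z : E} {r ρ : ℝ} (hr : 0 < r) (hrρ : r ≤ ρ) (hz : z ∈ closedBall c ρ) :
    ∃ c', dist c' z ≤ r ∧ closedBall c' r ⊆ closedBall c ρ := by
  have hρ : 0 < ρ := hr.trans_le hrρ
  have hzc : dist z c ≤ ρ := hz
  have ht₀ : 0 ≤ r / ρ := by positivity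
  have ht₁ : 0 ≤ 1 - r / ρ := sub_nonneg.2 ((div_le_one hρ).2 hrρ)
  refine ⟨AffineMap.lineMap z c (r / ρ), ?_, closedBall_subset_closedBall' ?_⟩
  · calc dist (AffineMap.lineMap z c (r / ρ)) z = r / ρ * dist z c := by
          rw [dist_lineMap_left, Real.norm_of_nonneg ht₀]
      _ ≤ r / ρ * ρ := by gcongr
      _ = r := div_mul_cancel₀ r hρ.ne'
  · calc r + dist (AffineMap.lineMap z c (r / ρ)) c = r + (1 - r / ρ) * dist z c := by
          rw [dist_lineMap_right, Real.norm_of_nonneg ht₁]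
      _ ≤ r + (1 - r / ρ) * ρ := by gcongr
      _ = ρ := by field_simp; ring

theorem exists_abs_sub_le_half_of_mem_Icc {a h t : ℝ} {N : ℕ} (hh : 0 < h)
    (ht : t ∈ Icc a (a + N * h)) : ∃ i ∈ Finset.range (N + 1), |t - (a + i * h)| ≤ h / 2 := by
  set u := (t - a) / h
  have hu₀ : 0 ≤ u := div_nonneg (by linarith [ht.1]) hh.le
  have huN : u ≤ N := (div_le_iff₀ hh).2 (by linarith [ht.2])
  set i := ⌊u + 1 / 2⌋₊
  have hi₁ : (i : ℝ) ≤ u + 1 / 2 := Nat.floor_le (by positivity)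
  have hi₂ : u + 1 / 2 < i + 1 := Nat.lt_floor_add_one _
  refine ⟨i, Finset.mem_range.2 (by exact_mod_cast (show (i : ℝ) < N + 1 by linarith)), ?_⟩
  have hsub : t - (a + i * h) = (u - i) * h := by
    simp only [u]; field_simp; ring
  rw [hsub, abs_mul, abs_of_pos hh]
  have : |u - i| ≤ 1 / 2 := abs_le.2 ⟨by linarith, by linarith⟩
  nlinarith

theorem isClosed_square (s : ℝ) : IsClosed (square s) :=
  (isClosed_Icc.preimage (EuclideanSpace.proj (0 : Fin 2)).continuous).inter
    (isClosed_Icc.preimage (EuclideanSpace.proj (1 : Fin 2)).continuous)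

theorem mem_interior_square {s : ℝ} {x : EuclideanSpace ℝ (Fin 2)}
    (h₀ : x 0 ∈ Ioo 0 s) (h₁ : x 1 ∈ Ioo 0 s) : x ∈ interior (square s) := by
  have hopen : IsOpen {x : EuclideanSpace ℝ (Fin 2) | x 0 ∈ Ioo 0 s ∧ x 1 ∈ Ioo 0 s} :=
    (isOpen_Ioo.preimage (EuclideanSpace.proj (0 : Fin 2)).continuous).inter
      (isOpen_Ioo.preimage (EuclideanSpace.proj (1 : Fin 2)).continuous)
  refine interior_maximal (fun y hy => ?_) hopen ⟨h₀, h₁⟩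
  exact ⟨Ioo_subset_Icc_self hy.1, Ioo_subset_Icc_self hy.2⟩

theorem mem_square_and_coord_eq_of_mem_frontier {s : ℝ} {z : EuclideanSpace ℝ (Fin 2)}
    (hz : z ∈ frontier (square s)) :
    z ∈ square s ∧ ((z 0 = 0 ∨ z 0 = s) ∨ (z 1 = 0 ∨ z 1 = s)) := by
  have hmem : z ∈ square s := (isClosed_square s).frontier_subset hz
  refine ⟨hmem, ?_⟩
  by_contra! h
  obtain ⟨⟨h00, h01⟩, h10, h11⟩ := hmem
  obtain ⟨⟨e00, e0s⟩, e10, e1s⟩ := h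
  exact hz.2 (mem_interior_square ⟨h00.lt_of_ne' e00, h01.lt_of_ne e0s⟩
    ⟨h10.lt_of_ne' e10, h11.lt_of_ne e1s⟩)

noncomputable def latticePoints (s r : ℝ) : Finset ℝ :=
  (Finset.range (⌈s / r⌉₊ + 3)).image fun i : ℕ => -r + i * r

noncomputable def edgeOffsets (s r : ℝ) : Finset ℝ := {-r / 2, r / 2, s - r / 2, s + r / 2}

noncomputable def planeEquivProd : ℝ × ℝ ≃ EuclideanSpace ℝ (Fin 2) :=
  (finTwoArrowEquiv ℝ).symm.trans (WithLp.equiv 2 (Fin 2 → ℝ)).symm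

noncomputable def piercingSet (s r : ℝ) : Finset (EuclideanSpace ℝ (Fin 2)) :=
  (latticePoints s r ×ˢ edgeOffsets s r ∪ edgeOffsets s r ×ˢ latticePoints s r).map
    planeEquivProd.toEmbedding

theorem exists_mem_latticePoints {s r t : ℝ} (hr : 0 < r) (ht : t ∈ Icc (-r) (s + r)) :
    ∃ a ∈ latticePoints s r, |t - a| ≤ r / 2 := by
  have hs : s ≤ ⌈s / r⌉₊ * r := (div_le_iff₀ hr).1 (Nat.le_ceil _)
  have ht' : t ∈ Icc (-r) (-r + ↑(⌈s / r⌉₊ + 2) * r) := ⟨ht.1, by push_cast; linarith [ht.2]⟩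
  obtain ⟨i, hi, hti⟩ := exists_abs_sub_le_half_of_mem_Icc hr ht'
  exact ⟨_, Finset.mem_image_of_mem _ hi, hti⟩

theorem exists_mem_edgeOffsets {s r u e : ℝ} (he : e = 0 ∨ e = s) (hue : |u - e| ≤ r) :
    ∃ b ∈ edgeOffsets s r, |u - b| ≤ r / 2 := by
  obtain ⟨h₁, h₂⟩ := abs_le.1 hue
  have hlow : e - r / 2 ∈ edgeOffsets s r := by
    rcases he with rfl | rfl <;> simp [edgeOffsets, neg_div]
  have hhigh : e + r / 2 ∈ edgeOffsets s r := by
    rcases he with rfl | rfl <;> simp [edgeOffsets]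
  rcases le_total u e with h | h
  · exact ⟨_, hlow, abs_le.2 ⟨by linarith, by linarith⟩⟩
  · exact ⟨_, hhigh, abs_le.2 ⟨by linarith, by linarith⟩⟩

theorem dist_le_of_abs_sub_le_half {x y : EuclideanSpace ℝ (Fin 2)} {r : ℝ}
    (h₀ : |x 0 - y 0| ≤ r / 2) (h₁ : |x 1 - y 1| ≤ r / 2) : dist x y ≤ r := by
  have hr : 0 ≤ r := by linarith [abs_nonneg (x 0 - y 0)]
  rw [EuclideanSpace.dist_eq, Fin.sum_univ_two, Real.dist_eq, Real.dist_eq, sq_abs, sq_abs]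
  refine Real.sqrt_le_iff.2 ⟨hr, ?_⟩
  nlinarith [sq_abs (x 0 - y 0), sq_abs (x 1 - y 1), abs_nonneg (x 0 - y 0), abs_nonneg (x 1 - y 1)]

theorem card_piercingSet_le {s r : ℝ} (hs : 0 ≤ s) (hr : 0 ≤ r) :
    ((piercingSet s r).card : ℝ) ≤ 8 * (s / r + 4) := by
  have hL : (latticePoints s r).card ≤ ⌈s / r⌉₊ + 3 :=
    Finset.card_image_le.trans (Finset.card_range _).le
  have hE : (edgeOffsets s r).card ≤ 4 := Finset.card_le_four
  have hcard : (piercingSet s r).card ≤ 8 * (⌈s / r⌉₊ + 3) := by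
    rw [piercingSet, Finset.card_map]
    refine (Finset.card_union_le _ _).trans ?_
    rw [Finset.card_product, Finset.card_product]
    nlinarith
  have hceil : (⌈s / r⌉₊ : ℝ) < s / r + 1 := Nat.ceil_lt_add_one (div_nonneg hs hr)
  calc ((piercingSet s r).card : ℝ) ≤ 8 * ((⌈s / r⌉₊ : ℝ) + 3) := by exact_mod_cast hcard
    _ ≤ 8 * (s / r + 4) := by linarith

theorem exists_mem_piercingSet_dist_le {s r : ℝ} (hr : 0 < r) {c z : EuclideanSpace ℝ (Fin 2)}
    (hz : z ∈ frontier (square s)) (hcz : dist c z ≤ r) :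
    ∃ y ∈ piercingSet s r, dist y c ≤ r := by
  obtain ⟨⟨⟨hz₀, hz₀'⟩, hz₁, hz₁'⟩, hedge⟩ := mem_square_and_coord_eq_of_mem_frontier hz
  have hc₀ : |c 0 - z 0| ≤ r := (PiLp.dist_apply_le c z 0).trans hcz
  have hc₁ : |c 1 - z 1| ≤ r := (PiLp.dist_apply_le c z 1).trans hcz
  obtain ⟨hc₀l, hc₀u⟩ := abs_le.1 hc₀
  obtain ⟨hc₁l, hc₁u⟩ := abs_le.1 hc₁
  rcases hedge with hedge | hedge
  · obtain ⟨b, hb, hcb⟩ := exists_mem_edgeOffsets hedge hc₀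
    obtain ⟨a, ha, hca⟩ := exists_mem_latticePoints (s := s) hr (t := c 1)
      ⟨by linarith, by linarith⟩
    refine ⟨planeEquivProd (b, a), Finset.mem_map_equiv.2 ?_, ?_⟩
    · simpa using Or.inr ⟨hb, ha⟩
    · exact dist_le_of_abs_sub_le_half (by rwa [abs_sub_comm]) (by rwa [abs_sub_comm])
  · obtain ⟨b, hb, hcb⟩ := exists_mem_edgeOffsets hedge hc₁
    obtain ⟨a, ha, hca⟩ := exists_mem_latticePoints (s := s) hr (t := c 0)
      ⟨by linarith, by linarith⟩
    refine ⟨planeEquivProd (a, b), Finset.mem_map_equiv.2 ?_, ?_⟩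
    · simpa using Or.inl ⟨ha, hb⟩
    · exact dist_le_of_abs_sub_le_half (by rwa [abs_sub_comm]) (by rwa [abs_sub_comm])

/-- There is a piercing set `Y` of at most `12 (s/r + 4)` points such that every closed disk of
radius at least `r` intersecting the boundary of the square `[0, s]²` contains a point of `Y`. -/
theorem stmt10 (s r : ℝ) (hs : 0 < s) (hr : 0 < r) :
    ∃ Y : Finset (EuclideanSpace ℝ (Fin 2)),
      (Y.card : ℝ) ≤ 12 * (s / r + 4) ∧
      ∀ (c : EuclideanSpace ℝ (Fin 2)) (ρ : ℝ), r ≤ ρ →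
        (Metric.closedBall c ρ ∩ frontier (square s)).Nonempty →
        ∃ y ∈ Y, y ∈ Metric.closedBall c ρ := by
  refine ⟨piercingSet s r, (card_piercingSet_le hs.le hr.le).trans ?_, ?_⟩
  · have : 0 ≤ s / r := by positivity
    linarith
  · rintro c ρ hrρ ⟨z, hzc, hz⟩
    obtain ⟨c', hc'z, hsub⟩ := exists_closedBall_subset_of_mem_closedBall hr hrρ hzc
    obtain ⟨y, hy, hyc'⟩ := exists_mem_piercingSet_dist_le hr hz hc'z
    exact ⟨y, hy, hsub hyc'⟩
end
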